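/- Let X = (X₁,…,X_p) be an ℝ^p-valued random vector and let f₁,…,f_p : ℝ → ℝ be strictly increasing functions such that each f_j(X_j) has the Gaussian distribution N(μ_j, σ_j²) with σ_j > 0. Let ν denote the law of the random vector Z = (f₁(X₁),…,f_p(X_p)). Then for every x = (x₁,…,x_p) with F_j(x_j) ∈ (0,1) for all j, the joint distribution function satisfies P(X₁ ≤ x₁, …, X_p ≤ x_p) = ν({z ∈ ℝ^p : z_j ≤ μ_j + σ_j·Φ⁻¹(F_j(x_j)) for all j}), where F_j is the marginal CDF of X_j. (This is the Gaussian copula representation of the nonparanormal distribution.) -/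

import Mathlib

open MeasureTheory ProbabilityTheory Set

/-- The standard normal cumulative distribution function Φ. -/
noncomputable def stdNormalCDF (t : ℝ) : ℝ := ((gaussianReal 0 1) (Iic t)).toReal

/-- The standard normal quantile function Φ⁻¹ : (0,1) → ℝ (an inverse of Φ). -/
noncomputable def stdNormalQuantile : ℝ → ℝ := Function.invFun stdNormalCDF

lemma stdNormalCDF_strictMono : StrictMono stdNormalCDF := by
  intro s t hst
  have h1 : (1 : NNReal) ≠ 0 := one_ne_zero
  have hpos : 0 < gaussianReal 0 1 (Ioc s t) := by
    rw [pos_iff_ne_zero]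
    intro h0
    have := (gaussianReal_absolutelyContinuous' 0 h1) h0
    rw [Real.volume_Ioc] at this
    simp only [ENNReal.ofReal_eq_zero, sub_nonpos] at this
    exact absurd this (not_le.2 hst)
  have hsplit : Iic t = Iic s ∪ Ioc s t := (Set.Iic_union_Ioc_eq_Iic hst.le).symm
  have hne : ∀ u : ℝ, gaussianReal 0 1 (Iic u) ≠ ⊤ := fun u => measure_ne_top _ _
  have : gaussianReal 0 1 (Iic t) = gaussianReal 0 1 (Iic s) + gaussianReal 0 1 (Ioc s t) := by
    rw [hsplit, measure_union (Set.Iic_disjoint_Ioc le_rfl) measurableSet_Ioc]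
  unfold stdNormalCDF
  rw [this, ENNReal.toReal_add (hne s) (measure_ne_top _ _)]
  have := ENNReal.toReal_pos hpos.ne' (measure_ne_top _ _)
  linarith

lemma gaussian_Iic (m s : ℝ) (hs : 0 < s) (c : ℝ) :
    gaussianReal m (Real.toNNReal (s ^ 2)) (Iic c) = gaussianReal 0 1 (Iic ((c - m) / s)) := by
  have hmap : (gaussianReal 0 1).map (fun z => s * z + m)
      = gaussianReal m (Real.toNNReal (s ^ 2)) := by
    have h1 : (gaussianReal 0 1).map (s * ·) = gaussianReal 0 (NNReal.mk (s ^ 2) (sq_nonneg s)) := by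
      rw [gaussianReal_map_const_mul s]
      norm_num
    have h2 : ((gaussianReal 0 (NNReal.mk (s ^ 2) (sq_nonneg s))).map (· + m))
        = gaussianReal m (NNReal.mk (s ^ 2) (sq_nonneg s)) := by
      rw [gaussianReal_map_add_const m]; norm_num
    have : (fun z => s * z + m) = (· + m) ∘ (s * ·) := rfl
    rw [this, ← Measure.map_map (measurable_add_const m) (measurable_const_mul s), h1, h2]
    congr 1
    ext
    simp [Real.coe_toNNReal _ (sq_nonneg s)]
  rw [← hmap, Measure.map_apply ((measurable_const_mul s).add_const m) measurableSet_Iic]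
  congr 1
  ext z
  simp only [mem_preimage, mem_Iic]
  rw [le_div_iff₀ hs, ← sub_nonneg]
  constructor <;> intro h <;> nlinarith

/-- the Gaussian copula representation of the nonparanormal distribution.
If each `f j` is strictly increasing and `f j (X j) ~ N(μ j, (σ j)²)` with `σ j > 0`, and
`ν` is the law of `Z = (f₁(X₁),…,f_p(X_p))`, then for every `x` with `F j (x j) ∈ (0,1)`,
`P(X₁ ≤ x₁, …, X_p ≤ x_p) = ν {z | ∀ j, z j ≤ μ j + σ j Φ⁻¹(F j (x j))}`. -/
theorem stmt1 {Ω : Type*} [MeasurableSpace Ω] (P : Measure Ω) [IsProbabilityMeasure P]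
    {p : ℕ} (X : Ω → Fin p → ℝ) (hX : Measurable X)
    (f : Fin p → ℝ → ℝ) (hf : ∀ j, StrictMono (f j))
    (μ σ : Fin p → ℝ) (hσ : ∀ j, 0 < σ j)
    (hlaw : ∀ j, P.map (fun ω => f j (X ω j)) = gaussianReal (μ j) (Real.toNNReal ((σ j) ^ 2)))
    (F : Fin p → ℝ → ℝ) (hF : ∀ j x, F j x = (P {ω | X ω j ≤ x}).toReal)
    (ν : Measure (Fin p → ℝ)) (hν : ν = P.map (fun ω => fun j => f j (X ω j))) :
    ∀ x : Fin p → ℝ, (∀ j, F j (x j) ∈ Set.Ioo (0 : ℝ) 1) →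
      (P {ω | ∀ j, X ω j ≤ x j}).toReal =
        (ν {z | ∀ j, z j ≤ μ j + σ j * stdNormalQuantile (F j (x j))}).toReal := by
  intro x hx
  set c : Fin p → ℝ := fun j => f j (x j) with hc
  have hfj_meas : ∀ j, Measurable (f j) := fun j => (hf j).monotone.measurable
  have hXj : ∀ j, Measurable fun ω => X ω j := fun j => (measurable_pi_apply j).comp hX
  have hZj : ∀ j, Measurable fun ω => f j (X ω j) := fun j => (hfj_meas j).comp (hXj j)
  have hZ : Measurable (fun ω => fun j => f j (X ω j)) :=
    measurable_pi_lambda _ fun j => (hfj_meas j).comp (hXj j)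
  have key : ∀ j, F j (x j) = stdNormalCDF ((c j - μ j) / σ j) := by
    intro j
    rw [hF]
    have hset : {ω | X ω j ≤ x j} = (fun ω => f j (X ω j)) ⁻¹' Iic (c j) := by
      ext ω; simp [hc, (hf j).le_iff_le]
    rw [hset, ← Measure.map_apply (hZj j) measurableSet_Iic, hlaw j,
      gaussian_Iic _ _ (hσ j)]
    rfl
  have hq : ∀ j, μ j + σ j * stdNormalQuantile (F j (x j)) = c j := by
    intro j
    rw [key j, stdNormalQuantile,
      Function.leftInverse_invFun stdNormalCDF_strictMono.injective]
    field_simp [mul_div_assoc', mul_comm, (hσ j).ne']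
    ring
  simp only [hq]
  have hmeas_set : MeasurableSet {z : Fin p → ℝ | ∀ j, z j ≤ c j} := by
    have : {z : Fin p → ℝ | ∀ j, z j ≤ c j}
        = ⋂ j, (fun z : Fin p → ℝ => z j) ⁻¹' Iic (c j) := by ext z; simp
    rw [this]
    exact MeasurableSet.iInter fun j => (measurable_pi_apply j) measurableSet_Iic
  rw [hν, Measure.map_apply hZ hmeas_set]
  congr 2
  ext ω
  simp only [mem_preimage, mem_setOf_eq, mem_Iic]
  exact forall_congr' fun j => ((hf j).le_iff_le).symm
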